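/- Let p and q be distinct primes and m, n positive integers, and let S = ⟨p^m, q^n⟩. Then the cyclotomic polynomial Φ_{p^m q^n}(x) divides P_S(x) in ℤ[x], and the quotient Q(x) = P_S(x)/Φ_{p^m q^n}(x) is a monic polynomial with Q(0) = 1 whose nonzero coefficients, read in order of increasing degree, alternate between +1 and −1, beginning with +1. -/

import Mathlib

open Polynomial
open scoped Classical

/-- A numerical semigroup: a subset of `ℕ` containing `0`, closed under addition,
with finite complement in `ℕ`. -/
structure NumericalSemigroup where
  carrier : Set ℕ
  zero_mem : 0 ∈ carrier
  add_mem : ∀ ⦃a b : ℕ⦄, a ∈ carrier → b ∈ carrier → a + b ∈ carrier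
  finite_compl : Set.Finite carrierᶜ

namespace NumericalSemigroup

/-- The Hilbert series `H_S(x) = Σ_{s ∈ S} x^s`. -/
noncomputable def H (S : NumericalSemigroup) : PowerSeries ℤ :=
  PowerSeries.mk fun n => if n ∈ S.carrier then 1 else 0

/-- The Hilbert series evaluated at `x^w`: `H_S(x^w) = Σ_{s ∈ S} x^{w·s}`. -/
noncomputable def Hexp (S : NumericalSemigroup) (w : ℕ) : PowerSeries ℤ :=
  PowerSeries.mk fun n => if ∃ s ∈ S.carrier, n = w * s then 1 else 0

/-- The semigroup polynomial `P_S(x) = (1-x)·H_S(x) = 1 + (x-1)·Σ_{s ∉ S} x^s`. -/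
noncomputable def P (S : NumericalSemigroup) : Polynomial ℤ :=
  1 + (X - 1) * ∑ s ∈ S.finite_compl.toFinset, X ^ s

/-- The Frobenius number: the largest integer not in `S` (equal to `-1` when `S = ℕ`). -/
noncomputable def Frob (S : NumericalSemigroup) : ℤ :=
  (insert (-1 : ℤ) (S.finite_compl.toFinset.image fun n : ℕ => (n : ℤ))).max'
    (Finset.insert_nonempty _ _)

/-- The genus: the number of gaps of `S`. -/
noncomputable def genus (S : NumericalSemigroup) : ℕ := S.finite_compl.toFinset.card

/-- `S` viewed as a set of integers. -/
def intSet (S : NumericalSemigroup) : Set ℤ := (fun n : ℕ => (n : ℤ)) '' S.carrier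

/-- `S` is cyclotomic if every complex root of `P_S` lies in the closed unit disc. -/
def IsCyclotomicNS (S : NumericalSemigroup) : Prop :=
  ∀ z : ℂ, Polynomial.aeval z S.P = 0 → ‖z‖ ≤ 1

/-- `S` is symmetric if for every integer `z`, `z ∈ S ↔ F(S) - z ∉ S`. -/
def IsSymmetric (S : NumericalSemigroup) : Prop :=
  ∀ z : ℤ, z ∈ S.intSet ↔ S.Frob - z ∉ S.intSet

/-- The Apéry set of `S` with respect to `m`: elements `s ∈ S` with `s - m ∉ S`
(in particular all `s ∈ S` with `s < m`). -/
def Ap (S : NumericalSemigroup) (m : ℕ) : Set ℕ :=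
  {s ∈ S.carrier | ∀ t ∈ S.carrier, t + m ≠ s}

end NumericalSemigroup

/-- The nonzero coefficients of `Q`, read in order of increasing degree, alternate
between `+1` and `-1`: each coefficient is `0`, `1` or `-1`, and any two consecutive
nonzero coefficients have opposite signs. -/
def AlternatingCoeffs (Q : Polynomial ℤ) : Prop :=
  (∀ i, Q.coeff i = 0 ∨ Q.coeff i = 1 ∨ Q.coeff i = -1) ∧
  ∀ i j, i < j → Q.coeff i ≠ 0 → Q.coeff j ≠ 0 →
    (∀ k, i < k → k < j → Q.coeff k = 0) → Q.coeff j = -Q.coeff i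

/-! Write `a = p ^ m`, `b = q ^ n`, `c = p ^ (m - 1) * q ^ (n - 1)`. For a numerical semigroup
`S` and `c ∈ S`, `H_S(x) (1 - x ^ c)` is the generating polynomial of the Apéry set `Ap(S, c)`.
Every element of `⟨a, b, c⟩` is uniquely `a i + b j + c k` with `i < q ^ (n - 1)`,
`j < p ^ (m - 1)`, so `Ap(⟨a, b, c⟩, c)` is the grid of the `a i + b j`, and the same holds for
`⟨a, b⟩ = ⟨a, b, a b⟩`. Summing the grids as products of geometric series gives
`P_⟨a,b⟩ = (1 - x)(1 - x^(ab)) / ((1 - x^a)(1 - x^b))` and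
`P_⟨a,b,c⟩ = (1 - x)(1 - x^(pc))(1 - x^(qc)) / ((1 - x^a)(1 - x^b)(1 - x^c))`, while
`Φ_(ab)(x) = Φ_(pq)(x^c) = (1 - x^(ab))(1 - x^c) / ((1 - x^(pc))(1 - x^(qc)))`.
Hence `P_⟨a,b⟩ = Φ_(ab) · P_⟨a,b,c⟩`. Any semigroup polynomial `1 + (x - 1) Σ_(s ∉ S) x^s` is
monic with constant term `1`, and its coefficients, the successive differences of the `0/1`
indicator sequence of `S`, alternate in sign. -/

section GapPolynomial

variable {R : Type*} [CommRing R]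

lemma X_pow_sub_one_ne_zero [Nontrivial R] {k : ℕ} (hk : 0 < k) : (X ^ k - 1 : R[X]) ≠ 0 := by
  simpa using X_pow_sub_C_ne_zero hk (1 : R)

lemma monic_one_add_X_sub_one_mul_sum [Nontrivial R] (F : Finset ℕ) :
    (1 + (X - 1) * ∑ s ∈ F, X ^ s : R[X]).Monic := by
  rcases F.eq_empty_or_nonempty with rfl | hF
  · simp
  have hsum : (∑ s ∈ F, X ^ s : R[X]).Monic := by
    refine monic_of_natDegree_le_of_coeff_eq_one (F.max' hF)
      (natDegree_sum_le_of_forall_le _ _ fun s hs => ?_) ?_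
    · simpa using F.le_max' s hs
    · simp [coeff_X_pow, F.max'_mem hF]
  have hprod := (monic_X_sub_C (1 : R)).mul hsum
  rw [map_one] at hprod
  refine hprod.add_of_right ?_
  rw [degree_one]
  exact degree_pos_of_root (a := 1) hprod.ne_zero (by simp)

lemma coeff_zero_one_add_X_sub_one_mul_sum (F : Finset ℕ) :
    (1 + (X - 1) * ∑ s ∈ F, X ^ s : R[X]).coeff 0 = if 0 ∈ F then 0 else 1 := by
  split_ifs with h <;> simp [coeff_X_pow, h]

lemma coeff_succ_one_add_X_sub_one_mul_sum (F : Finset ℕ) (n : ℕ) :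
    (1 + (X - 1) * ∑ s ∈ F, X ^ s : R[X]).coeff (n + 1) =
      (if n ∈ F then 1 else 0) - if n + 1 ∈ F then 1 else 0 := by
  simp [sub_mul, coeff_X_mul, coeff_X_pow, coeff_one]

-- `h0` is the case `n = -1` of `hsucc` with `χ (-1) = 0`.
lemma alternatingCoeffs_of_coeff_eq_sub {Q : ℤ[X]} (χ : ℕ → ℤ) (hχ : ∀ n, χ n = 0 ∨ χ n = 1)
    (h0 : Q.coeff 0 = χ 0) (hsucc : ∀ n, Q.coeff (n + 1) = χ (n + 1) - χ n) :
    AlternatingCoeffs Q := by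
  refine ⟨fun i => ?_, fun i j hij hi hj hzero => ?_⟩
  · cases i with
    | zero => have := hχ 0; omega
    | succ i => have := hχ i; have := hχ (i + 1); rw [hsucc]; omega
  have hconst : ∀ k, i ≤ k → k < j → χ k = χ i := by
    intro k hik
    induction k, hik using Nat.le_induction with
    | base => exact fun _ => rfl
    | succ k hik ih =>
      intro hkj
      have := hzero (k + 1) (by omega) hkj
      rw [hsucc] at this
      rw [← ih (by omega)]; omega
  obtain ⟨j, rfl⟩ : ∃ j', j = j' + 1 := ⟨j - 1, by omega⟩
  rw [hsucc, hconst j (by omega) (by omega)] at hj ⊢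
  have := hχ i; have := hχ (j + 1)
  cases i with
  | zero => omega
  | succ i => have := hχ i; rw [hsucc] at hi ⊢; omega

lemma alternatingCoeffs_one_add_X_sub_one_mul_sum (F : Finset ℕ) :
    AlternatingCoeffs (1 + (X - 1) * ∑ s ∈ F, X ^ s) := by
  refine alternatingCoeffs_of_coeff_eq_sub (fun n => if n ∈ F then 0 else 1)
    (fun n => by split_ifs <;> simp) (coeff_zero_one_add_X_sub_one_mul_sum F) fun n => ?_
  rw [coeff_succ_one_add_X_sub_one_mul_sum]
  split_ifs <;> norm_num

end GapPolynomial

namespace NumericalSemigroup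

variable (S : NumericalSemigroup)

lemma monic_P : S.P.Monic := monic_one_add_X_sub_one_mul_sum _

lemma coeff_P_zero : S.P.coeff 0 = 1 := by
  rw [P, coeff_zero_one_add_X_sub_one_mul_sum, if_neg]
  simpa using S.zero_mem

lemma alternatingCoeffs_P : AlternatingCoeffs S.P := alternatingCoeffs_one_add_X_sub_one_mul_sum _

lemma coe_P : (S.P : PowerSeries ℤ) = (1 - PowerSeries.X) * S.H := by
  have hH : S.H =
      PowerSeries.mk 1 - ((∑ s ∈ S.finite_compl.toFinset, X ^ s : ℤ[X]) : PowerSeries ℤ) := by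
    ext n
    by_cases hn : n ∈ S.carrier <;> simp [H, hn, coeff_X_pow]
  rw [hH, mul_sub, mul_comm, PowerSeries.mk_one_mul_one_sub_eq_one, P]
  push_cast
  ring

lemma H_mul_one_sub_X_pow {c : ℕ} (hc : c ∈ S.carrier) {A : Finset ℕ} (hA : ↑A = S.Ap c) :
    S.H * (1 - PowerSeries.X ^ c) = ((∑ w ∈ A, X ^ w : ℤ[X]) : PowerSeries ℤ) := by
  ext n
  have hmem : n ∈ A ↔ n ∈ S.carrier ∧ ∀ t ∈ S.carrier, t + c ≠ n := by
    rw [← Finset.mem_coe, hA]; rfl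
  rw [mul_sub, mul_one, map_sub, PowerSeries.coeff_mul_X_pow', Polynomial.coeff_coe]
  simp only [H, PowerSeries.coeff_mk, finsetSum_coeff, coeff_X_pow, Finset.sum_ite_eq, hmem]
  by_cases hcn : c ≤ n
  · have hsplit : n = n - c + c := by omega
    by_cases hnc : n - c ∈ S.carrier
    · have hn : n ∈ S.carrier := hsplit ▸ S.add_mem hnc hc
      simpa [hcn, hnc, hn] using ⟨n - c, hnc, by omega⟩
    · have : ∀ t ∈ S.carrier, t + c ≠ n := fun t ht h => hnc (by rwa [← h, Nat.add_sub_cancel])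
      simp [hcn, hnc, and_iff_left this]
  · have : ∀ t, t + c ≠ n := fun t => by omega
    simp [hcn, this]

lemma P_mul_one_sub_X_pow {c : ℕ} (hc : c ∈ S.carrier) {A : Finset ℕ} (hA : ↑A = S.Ap c) :
    S.P * (1 - X ^ c) = (1 - X) * ∑ w ∈ A, X ^ w := by
  rw [← coe_inj]
  push_cast
  rw [coe_P, mul_assoc, S.H_mul_one_sub_X_pow hc hA]

end NumericalSemigroup

section NormalForm

variable {a b u v : ℕ}

lemma eq_of_add_eq_add_add_mul (hua : u ∣ a) (hvb : v ∣ b) (hub : u.Coprime b)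
    (hva : v.Coprime a) {i i' j j' k : ℕ} (hi : i < v) (hi' : i' < v) (hj : j < u) (hj' : j' < u)
    (h : a * i + b * j = a * i' + b * j' + u * v * k) : i = i' ∧ j = j' ∧ k = 0 := by
  obtain ⟨s, rfl⟩ := hua
  obtain ⟨t, rfl⟩ := hvb
  have hz : ((u * s * i + v * t * j : ℕ) : ℤ) = (u * s * i' + v * t * j' + u * v * k : ℕ) :=
    congrArg _ h
  push_cast at hz
  have hjj : j = j' := by
    refine (Nat.ModEq.cancel_left_of_coprime hub (Nat.modEq_iff_dvd.2 ?_)).eq_of_lt_of_lt hj hj'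
    exact ⟨s * i - s * i' - v * k, by push_cast; linear_combination -hz⟩
  have hii : i = i' := by
    refine (Nat.ModEq.cancel_left_of_coprime hva (Nat.modEq_iff_dvd.2 ?_)).eq_of_lt_of_lt hi hi'
    exact ⟨t * j - t * j' - u * k, by push_cast; linear_combination -hz⟩
  subst hii hjj
  have hk : u * v * k = 0 := by omega
  exact ⟨rfl, rfl, by simpa [(Nat.zero_lt_of_lt hi).ne', (Nat.zero_lt_of_lt hj).ne'] using hk⟩

lemma exists_normalForm (hua : u ∣ a) (hvb : v ∣ b) (hu : 0 < u) (hv : 0 < v) (I J K : ℕ) :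
    ∃ i < v, ∃ j < u, ∃ k, a * I + b * J + u * v * K = a * i + b * j + u * v * k := by
  obtain ⟨s, rfl⟩ := hua
  obtain ⟨t, rfl⟩ := hvb
  refine ⟨I % v, Nat.mod_lt _ hv, J % u, Nat.mod_lt _ hu, s * (I / v) + t * (J / u) + K, ?_⟩
  conv_lhs => rw [← Nat.mod_add_div I v, ← Nat.mod_add_div J u]
  ring

end NormalForm

def gridSums (a b r s : ℕ) : Finset ℕ :=
  (Finset.range r ×ˢ Finset.range s).image fun ij => a * ij.1 + b * ij.2

lemma mem_gridSums {a b r s x : ℕ} :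
    x ∈ gridSums a b r s ↔ ∃ i < r, ∃ j < s, x = a * i + b * j := by
  simp [gridSums, eq_comm, and_assoc]

lemma sum_X_pow_gridSums_mul {R : Type*} [CommRing R] {a b r s : ℕ}
    (hinj : Set.InjOn (fun ij : ℕ × ℕ => a * ij.1 + b * ij.2)
      ↑(Finset.range r ×ˢ Finset.range s)) :
    (∑ w ∈ gridSums a b r s, X ^ w : R[X]) * (X ^ a - 1) * (X ^ b - 1) =
      (X ^ (a * r) - 1) * (X ^ (b * s) - 1) := by
  rw [gridSums, Finset.sum_image hinj, Finset.sum_product]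
  simp_rw [pow_add, pow_mul, ← Finset.mul_sum, ← Finset.sum_mul]
  rw [← geom_sum_mul (X ^ a) r, ← geom_sum_mul (X ^ b) s]
  ring

namespace NumericalSemigroup

variable {S : NumericalSemigroup} {a b u v : ℕ}

lemma ap_eq_gridSums (hua : u ∣ a) (hvb : v ∣ b) (hub : u.Coprime b) (hva : v.Coprime a)
    (hS : ∀ x, x ∈ S.carrier ↔ ∃ i < v, ∃ j < u, ∃ k, x = a * i + b * j + u * v * k) :
    S.Ap (u * v) = ↑(gridSums a b v u) := by
  ext x
  simp only [Ap, Set.mem_ofPred_eq, Finset.mem_coe, mem_gridSums, hS]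
  constructor
  · rintro ⟨⟨i, hi, j, hj, k, rfl⟩, hmin⟩
    cases k with
    | zero => exact ⟨i, hi, j, hj, by ring⟩
    | succ k => exact absurd (by ring) (hmin _ ⟨i, hi, j, hj, k, rfl⟩)
  · rintro ⟨i, hi, j, hj, rfl⟩
    refine ⟨⟨i, hi, j, hj, 0, by ring⟩, ?_⟩
    rintro _ ⟨i', hi', j', hj', k, rfl⟩ h
    have := eq_of_add_eq_add_add_mul hua hvb hub hva hi hi' hj hj' (k := k + 1)
      (by rw [← h]; ring)
    omega

lemma P_mul_eq_of_normalForm (hua : u ∣ a) (hvb : v ∣ b) (hub : u.Coprime b) (hva : v.Coprime a)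
    (hS : ∀ x, x ∈ S.carrier ↔ ∃ i < v, ∃ j < u, ∃ k, x = a * i + b * j + u * v * k) :
    S.P * (X ^ (u * v) - 1) * (X ^ a - 1) * (X ^ b - 1) =
      (X - 1) * (X ^ (a * v) - 1) * (X ^ (u * b) - 1) := by
  obtain ⟨i, hi, j, hj, -⟩ := (hS 0).1 S.zero_mem
  have hc : u * v ∈ S.carrier := (hS _).2 ⟨0, by omega, 0, by omega, 1, by ring⟩
  have hinj : Set.InjOn (fun ij : ℕ × ℕ => a * ij.1 + b * ij.2)
      ↑(Finset.range v ×ˢ Finset.range u) := by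
    rintro ⟨i, j⟩ hij ⟨i', j'⟩ hij' h
    simp only [Finset.coe_product, Set.mem_prod, Finset.coe_range, Set.mem_Iio] at hij hij'
    obtain ⟨rfl, rfl, -⟩ := eq_of_add_eq_add_add_mul hua hvb hub hva hij.1 hij'.1 hij.2 hij'.2
      (k := 0) (by simpa using h)
    rfl
  calc S.P * (X ^ (u * v) - 1) * (X ^ a - 1) * (X ^ b - 1)
      = -(S.P * (1 - X ^ (u * v))) * (X ^ a - 1) * (X ^ b - 1) := by ring
    _ = (X - 1) * ((∑ w ∈ gridSums a b v u, X ^ w) * (X ^ a - 1) * (X ^ b - 1)) := by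
      rw [S.P_mul_one_sub_X_pow hc (ap_eq_gridSums hua hvb hub hva hS).symm]; ring
    _ = _ := by rw [sum_X_pow_gridSums_mul hinj]; ring

end NumericalSemigroup

section Closure

variable {a b u v x : ℕ}

lemma mem_closure_triple_iff {c : ℕ} :
    x ∈ AddSubmonoid.closure ({a, b, c} : Set ℕ) ↔ ∃ I J K, x = a * I + b * J + c * K := by
  rw [← Submodule.span_nat_eq_addSubmonoidClosure]
  simp only [Submodule.mem_toAddSubmonoid, Submodule.mem_span_insert,
    Submodule.mem_span_singleton]
  constructor
  · rintro ⟨I, _, ⟨J, _, ⟨K, rfl⟩, rfl⟩, rfl⟩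
    exact ⟨I, J, K, by simp [mul_comm, add_assoc]⟩
  · rintro ⟨I, J, K, rfl⟩
    exact ⟨I, _, ⟨J, _, ⟨K, rfl⟩, rfl⟩, by simp [mul_comm, add_assoc]⟩

lemma mem_closure_triple_iff_normalForm (hua : u ∣ a) (hvb : v ∣ b) (hu : 0 < u) (hv : 0 < v) :
    x ∈ AddSubmonoid.closure ({a, b, u * v} : Set ℕ) ↔
      ∃ i < v, ∃ j < u, ∃ k, x = a * i + b * j + u * v * k := by
  rw [mem_closure_triple_iff]
  constructor
  · rintro ⟨I, J, K, rfl⟩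
    exact exists_normalForm hua hvb hu hv I J K
  · rintro ⟨i, -, j, -, k, h⟩
    exact ⟨i, j, k, h⟩

lemma mem_closure_pair_iff_normalForm (ha : 0 < a) (hb : 0 < b) :
    x ∈ AddSubmonoid.closure ({a, b} : Set ℕ) ↔
      ∃ i < b, ∃ j < a, ∃ k, x = a * i + b * j + a * b * k := by
  rw [AddSubmonoid.mem_closure_pair]
  constructor
  · rintro ⟨I, J, rfl⟩
    simpa [mul_comm] using exists_normalForm (dvd_refl a) (dvd_refl b) ha hb I J 0
  · rintro ⟨i, -, j, -, k, rfl⟩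
    exact ⟨i + b * k, j, by simp; ring⟩

end Closure

namespace NumericalSemigroup

def closure (s : Set ℕ) (hs : (↑(AddSubmonoid.closure s) : Set ℕ)ᶜ.Finite) :
    NumericalSemigroup where
  carrier := AddSubmonoid.closure s
  zero_mem := (AddSubmonoid.closure s).zero_mem
  add_mem _ _ := (AddSubmonoid.closure s).add_mem
  finite_compl := hs

lemma P_mul_X_pow_sub_one_of_closure_pair {S : NumericalSemigroup} {a b : ℕ} (hab : a.Coprime b)
    (ha : 0 < a) (hb : 0 < b) (hS : S.carrier = AddSubmonoid.closure ({a, b} : Set ℕ)) :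
    S.P * (X ^ a - 1) * (X ^ b - 1) = (X - 1) * (X ^ (a * b) - 1) := by
  have h := P_mul_eq_of_normalForm (S := S) (dvd_refl a) (dvd_refl b) hab hab.symm
    fun x => hS ▸ mem_closure_pair_iff_normalForm ha hb
  refine mul_left_cancel₀ (X_pow_sub_one_ne_zero (Nat.mul_pos ha hb)) ?_
  linear_combination h

end NumericalSemigroup

section Cyclotomic

variable (R : Type*) [CommRing R] {p q : ℕ}

lemma cyclotomic_mul_mul_X_pow_sub_one (hp : p.Prime) (hq : q.Prime) (hpq : p ≠ q) :
    cyclotomic (p * q) R * (X ^ p - 1) * (X ^ q - 1) = (X ^ (p * q) - 1) * (X - 1) := by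
  have := Fact.mk hp
  have hΦp := cyclotomic_prime_mul_X_sub_one R p
  have hexp := congrArg (expand R q) hΦp
  rw [map_mul, cyclotomic_expand_eq_cyclotomic_mul hq
    (fun h => hpq ((Nat.prime_dvd_prime_iff_eq hq hp).1 h).symm)] at hexp
  simp only [map_sub, map_pow, map_one, expand_X, ← pow_mul, mul_comm q p] at hexp
  rw [← hΦp]
  linear_combination (X - 1) * hexp

lemma expand_cyclotomic_prime_pow (hp : p.Prime) {N : ℕ} (hN : p ∣ N) (k : ℕ) :
    expand R (p ^ k) (cyclotomic N R) = cyclotomic (N * p ^ k) R := by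
  induction k generalizing N with
  | zero => simp
  | succ k ih =>
    rw [pow_succ, ← expand_expand, cyclotomic_expand_eq_cyclotomic hp hN, ih (dvd_mul_left p N),
      mul_assoc, mul_comm p]

lemma cyclotomic_prime_pow_mul_prime_pow (hp : p.Prime) (hq : q.Prime) (hpq : p ≠ q) (m n : ℕ) :
    cyclotomic (p ^ (m + 1) * q ^ (n + 1)) R * (X ^ (p ^ (m + 1) * q ^ n) - 1) *
        (X ^ (p ^ m * q ^ (n + 1)) - 1) =
      (X ^ (p ^ (m + 1) * q ^ (n + 1)) - 1) * (X ^ (p ^ m * q ^ n) - 1) := by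
  have hΦ : expand R (p ^ m * q ^ n) (cyclotomic (p * q) R) =
      cyclotomic (p ^ (m + 1) * q ^ (n + 1)) R := by
    rw [← expand_expand, expand_cyclotomic_prime_pow R hq (dvd_mul_left q p),
      expand_cyclotomic_prime_pow R hp (dvd_mul_of_dvd_left (dvd_mul_right p q) _)]
    ring_nf
  have h := congrArg (expand R (p ^ m * q ^ n)) (cyclotomic_mul_mul_X_pow_sub_one R hp hq hpq)
  simp only [map_mul, map_sub, map_pow, map_one, expand_X, hΦ, ← pow_mul] at h
  convert h using 3 <;> ring_nf

end Cyclotomic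

open NumericalSemigroup in
/-- For distinct primes `p, q`, positive `m, n` and `S = ⟨p^m, q^n⟩`: `Φ_{p^m q^n}`
divides `P_S` in `ℤ[x]`, and the quotient `Q = P_S / Φ_{p^m q^n}` is monic with
`Q(0) = 1` and its nonzero coefficients alternate between `+1` and `-1`,
beginning with `+1`. -/
theorem semigroupPolynomial_div_cyclotomic (p q : ℕ) (hp : p.Prime) (hq : q.Prime)
    (hpq : p ≠ q) (m n : ℕ) (hm : 0 < m) (hn : 0 < n) (S : NumericalSemigroup)
    (hS : S.carrier = ↑(AddSubmonoid.closure ({p ^ m, q ^ n} : Set ℕ))) :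
    Polynomial.cyclotomic (p ^ m * q ^ n) ℤ ∣ S.P ∧
    ∃ Q : Polynomial ℤ, S.P = Polynomial.cyclotomic (p ^ m * q ^ n) ℤ * Q ∧
      Q.Monic ∧ Q.coeff 0 = 1 ∧ AlternatingCoeffs Q := by
  obtain ⟨m, rfl⟩ := Nat.exists_eq_add_one_of_ne_zero hm.ne'
  obtain ⟨n, rfl⟩ := Nat.exists_eq_add_one_of_ne_zero hn.ne'
  have hcop {i j : ℕ} : (p ^ i).Coprime (q ^ j) := ((Nat.coprime_primes hp hq).2 hpq).pow i j
  have hpm : p ^ m ∣ p ^ (m + 1) := pow_dvd_pow p (m.le_add_right 1)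
  have hqn : q ^ n ∣ q ^ (n + 1) := pow_dvd_pow q (n.le_add_right 1)
  let T := closure {p ^ (m + 1), q ^ (n + 1), p ^ m * q ^ n}
    (S.finite_compl.subset (Set.compl_subset_compl.2 (hS ▸ AddSubmonoid.closure_mono
      (Set.insert_subset_insert (Set.singleton_subset_iff.2 (Set.mem_insert _ _))))))
  have hSP := P_mul_X_pow_sub_one_of_closure_pair hcop (pow_pos hp.pos _) (pow_pos hq.pos _) hS
  have hTP := T.P_mul_eq_of_normalForm hpm hqn hcop hcop.symm fun _ =>
    mem_closure_triple_iff_normalForm hpm hqn (pow_pos hp.pos _) (pow_pos hq.pos _)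
  have hΦ := cyclotomic_prime_pow_mul_prime_pow ℤ hp hq hpq m n
  have hPQ : S.P = cyclotomic (p ^ (m + 1) * q ^ (n + 1)) ℤ * T.P := by
    refine mul_right_cancel₀ (mul_ne_zero (mul_ne_zero
      (X_pow_sub_one_ne_zero (Nat.mul_pos (pow_pos hp.pos m) (pow_pos hq.pos n)))
      (X_pow_sub_one_ne_zero (pow_pos hp.pos (m + 1))))
      (X_pow_sub_one_ne_zero (pow_pos hq.pos (n + 1)))) ?_
    linear_combination (X ^ (p ^ m * q ^ n) - 1) * hSP -
      cyclotomic (p ^ (m + 1) * q ^ (n + 1)) ℤ * hTP - (X - 1) * hΦ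
  exact ⟨⟨T.P, hPQ⟩, T.P, hPQ, T.monic_P, T.coeff_P_zero, T.alternatingCoeffs_P⟩
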